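/- arXiv:1303.2409 — 2 statements merged into one kernel-verified Lean document; each statement's English description precedes it below -/
import Mathlib

section
/- For every vector x = (x_1, …, x_n)ᵀ ∈ ℝⁿ, the quadratic form of the matrix A satisfies xᵀ A x = Σ_{i=1}^n (1/r_i) (g_{i+1} x_{i+1} + g_{i−1} x_i)ᵀ P_i (g_{i+1} x_{i+1} + g_{i−1} x_i) ≥ 0; in particular, A is positive semidefinite. -/
open Matrix Real Finset

/-- The orthogonal projection matrix `P = I − g gᵀ` for `g ∈ ℝ²`. -/
noncomputable def proj (g : Fin 2 → ℝ) : Matrix (Fin 2) (Fin 2) ℝ :=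
  1 - Matrix.vecMulVec g g

/-- The matrix `A` whose row `i` has entries
`[A]_{i,i−1} = (1/r_{i−1}) g_iᵀ P_{i−1} g_{i−2}`,
`[A]_{i,i} = (1/r_{i−1}) g_iᵀ P_{i−1} g_i + (1/r_i) g_{i−1}ᵀ P_i g_{i−1}`,
`[A]_{i,i+1} = (1/r_i) g_{i−1}ᵀ P_i g_{i+1}`, and all other entries of row `i` zero
(indices modulo `n`). -/
noncomputable def Amat (n : ℕ) [NeZero n] (g : ZMod n → Fin 2 → ℝ) (r : ZMod n → ℝ) :
    Matrix (ZMod n) (ZMod n) ℝ := fun i j =>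
  (if j = i - 1 then (1 / r (i - 1)) * (g i ⬝ᵥ proj (g (i - 1)) *ᵥ g (i - 2)) else 0) +
  (if j = i then
      (1 / r (i - 1)) * (g i ⬝ᵥ proj (g (i - 1)) *ᵥ g i) +
      (1 / r i) * (g (i - 1) ⬝ᵥ proj (g i) *ᵥ g (i - 1))
    else 0) +
  (if j = i + 1 then (1 / r i) * (g (i - 1) ⬝ᵥ proj (g i) *ᵥ g (i + 1)) else 0)

lemma proj_expand (g u v : Fin 2 → ℝ) :
    u ⬝ᵥ proj g *ᵥ v = (u 0 * v 0 + u 1 * v 1)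
      - (g 0 * u 0 + g 1 * u 1) * (g 0 * v 0 + g 1 * v 1) := by
  simp [proj, Matrix.mulVec, Matrix.vecMulVec_apply, dotProduct, Fin.sum_univ_two,
    Matrix.sub_apply, Matrix.one_apply]
  ring

lemma proj_nonneg (g v : Fin 2 → ℝ) (hg : g ⬝ᵥ g = 1) : 0 ≤ v ⬝ᵥ proj g *ᵥ v := by
  have h1 : g 0 * g 0 + g 1 * g 1 = 1 := by
    simpa [dotProduct, Fin.sum_univ_two] using hg
  rw [proj_expand]
  nlinarith [sq_nonneg (g 0 * v 1 - g 1 * v 0)]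

/-- For every `x ∈ ℝⁿ`,
`xᵀ A x = Σᵢ (1/rᵢ) (g_{i+1} x_{i+1} + g_{i−1} xᵢ)ᵀ Pᵢ (g_{i+1} x_{i+1} + g_{i−1} xᵢ) ≥ 0`;
in particular, `A` is positive semidefinite. -/
theorem stmt0 (n : ℕ) [NeZero n] (hn : 3 ≤ n)
    (g : ZMod n → Fin 2 → ℝ) (hg : ∀ i, g i ⬝ᵥ g i = 1)
    (r : ZMod n → ℝ) (hr : ∀ i, 0 < r i) (x : ZMod n → ℝ) :
    x ⬝ᵥ Amat n g r *ᵥ x =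
      ∑ i : ZMod n, (1 / r i) *
        ((x (i + 1) • g (i + 1) + x i • g (i - 1)) ⬝ᵥ
          proj (g i) *ᵥ (x (i + 1) • g (i + 1) + x i • g (i - 1))) ∧
    0 ≤ x ⬝ᵥ Amat n g r *ᵥ x := by
  have key : ∀ F : ZMod n → ℝ, ∑ i, F (i + 1) = ∑ i, F i := fun F =>
    Fintype.sum_equiv (Equiv.addRight 1) _ _ (fun i => rfl)
  have e1 : ∀ i : ZMod n, i + 1 - 1 = i := fun i => by ring
  have e2 : ∀ i : ZMod n, i + 1 - 2 = i - 1 := fun i => by ring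
  -- the two "left" pieces and the two "right" pieces of the LHS per-index term
  set P : ZMod n → ℝ := fun i =>
    x i * ((1 / r (i - 1)) * (g i ⬝ᵥ proj (g (i - 1)) *ᵥ g (i - 2))) * x (i - 1)
    + x i * ((1 / r (i - 1)) * (g i ⬝ᵥ proj (g (i - 1)) *ᵥ g i)) * x i with hP
  set Q : ZMod n → ℝ := fun i =>
    x i * ((1 / r i) * (g (i - 1) ⬝ᵥ proj (g i) *ᵥ g (i - 1))) * x i
    + x i * ((1 / r i) * (g (i - 1) ⬝ᵥ proj (g i) *ᵥ g (i + 1))) * x (i + 1) with hQ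
  have hL : x ⬝ᵥ Amat n g r *ᵥ x = ∑ i, (P i + Q i) := by
    simp only [dotProduct, Matrix.mulVec]
    simp only [Amat, add_mul, ite_mul, zero_mul,
      Finset.sum_add_distrib, Finset.sum_ite_eq', Finset.mem_univ, if_true]
    rw [← Finset.sum_add_distrib]
    apply Finset.sum_congr rfl
    intro i _
    simp only [hP, hQ]
    ring
  have hshift : ∑ i, P i = ∑ i, (fun i =>
      x (i + 1) * ((1 / r i) * (g (i + 1) ⬝ᵥ proj (g i) *ᵥ g (i - 1))) * x i
      + x (i + 1) * ((1 / r i) * (g (i + 1) ⬝ᵥ proj (g i) *ᵥ g (i + 1))) * x (i + 1)) i := by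
    rw [← key P]
    apply Finset.sum_congr rfl
    intro i _
    simp only [hP, e1, e2]
  have hmain : x ⬝ᵥ Amat n g r *ᵥ x =
      ∑ i : ZMod n, (1 / r i) *
        ((x (i + 1) • g (i + 1) + x i • g (i - 1)) ⬝ᵥ
          proj (g i) *ᵥ (x (i + 1) • g (i + 1) + x i • g (i - 1))) := by
    rw [hL, Finset.sum_add_distrib, hshift, ← Finset.sum_add_distrib]
    apply Finset.sum_congr rfl
    intro i _
    simp only [hQ, proj_expand, Pi.add_apply, Pi.smul_apply, smul_eq_mul]
    ring
  refine ⟨hmain, ?_⟩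
  rw [hmain]
  apply Finset.sum_nonneg
  intro i _
  exact mul_nonneg (div_nonneg zero_le_one (hr i).le) (proj_nonneg _ _ (hg i))
end

section
/- Let s = (s_1, …, s_n)ᵀ ∈ ℝⁿ be arbitrary. For each i (indices modulo n), define v_i := s_{i+1} g_{i+1} + s_i g_{i−1} − (s_{i+1} + s_i) g_i ∈ ℝ² and h_i := (1/r_i) P_i v_i ∈ ℝ². Then for every i, g_iᵀ h_{i−1} + g_{i−1}ᵀ h_i = (A s)_i; that is, the vector whose i-th entry is −g_iᵀ h_{i−1} − g_{i−1}ᵀ h_i equals −A s. -/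
open Matrix Real Finset

lemma proj_mulVec_self (a : Fin 2 → ℝ) (ha : a ⬝ᵥ a = 1) : proj a *ᵥ a = 0 := by
  funext k
  simp only [dotProduct, Fin.sum_univ_two] at ha
  fin_cases k <;>
    simp [proj, mulVec, dotProduct, Fin.sum_univ_two, Matrix.sub_apply, Matrix.one_apply,
      vecMulVec_apply]
  · linear_combination (-(a 0)) * ha
  · linear_combination (-(a 1)) * ha

/-- Let `s ∈ ℝⁿ` be arbitrary. For each `i` (indices modulo `n`), define
`vᵢ := s_{i+1} g_{i+1} + sᵢ g_{i−1} − (s_{i+1} + sᵢ) gᵢ` and `hᵢ := (1/rᵢ) Pᵢ vᵢ`.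
Then for every `i`, `gᵢᵀ h_{i−1} + g_{i−1}ᵀ hᵢ = (A s)ᵢ`; that is, the vector whose `i`-th
entry is `−gᵢᵀ h_{i−1} − g_{i−1}ᵀ hᵢ` equals `−A s`. -/
theorem stmt12 (n : ℕ) [NeZero n] (hn : 3 ≤ n)
    (g : ZMod n → Fin 2 → ℝ) (hg : ∀ i, g i ⬝ᵥ g i = 1)
    (r : ZMod n → ℝ) (hr : ∀ i, 0 < r i) (s : ZMod n → ℝ)
    (v : ZMod n → Fin 2 → ℝ)
    (hv : ∀ i, v i = s (i + 1) • g (i + 1) + s i • g (i - 1) - (s (i + 1) + s i) • g i)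
    (h : ZMod n → Fin 2 → ℝ)
    (hh : ∀ i, h i = (1 / r i) • (proj (g i) *ᵥ v i)) :
    (∀ i, g i ⬝ᵥ h (i - 1) + g (i - 1) ⬝ᵥ h i = (Amat n g r *ᵥ s) i) ∧
    (fun i => -(g i ⬝ᵥ h (i - 1)) - g (i - 1) ⬝ᵥ h i) = -(Amat n g r *ᵥ s) := by

  have key : ∀ i, g i ⬝ᵥ h (i - 1) + g (i - 1) ⬝ᵥ h i = (Amat n g r *ᵥ s) i := by
    intro i
    have hA : (Amat n g r *ᵥ s) i =
        (1 / r (i - 1)) * (g i ⬝ᵥ proj (g (i - 1)) *ᵥ g (i - 2)) * s (i - 1) +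
        ((1 / r (i - 1)) * (g i ⬝ᵥ proj (g (i - 1)) *ᵥ g i) +
          (1 / r i) * (g (i - 1) ⬝ᵥ proj (g i) *ᵥ g (i - 1))) * s i +
        (1 / r i) * (g (i - 1) ⬝ᵥ proj (g i) *ᵥ g (i + 1)) * s (i + 1) := by
      simp only [Matrix.mulVec, dotProduct, Amat, add_mul, ite_mul, zero_mul,
        Finset.sum_add_distrib, Finset.sum_ite_eq', Finset.mem_univ, if_true]
    have hvv : v (i - 1) = s i • g i + s (i - 1) • g (i - 2) - (s i + s (i - 1)) • g (i - 1) := by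
      have e1 : i - 1 + 1 = i := by ring
      have e2 : i - 1 - 1 = i - 2 := by ring
      rw [hv, e1, e2]
    rw [hA, hh, hh, hvv, hv]
    simp only [Matrix.mulVec_add, Matrix.mulVec_sub, Matrix.mulVec_smul,
      proj_mulVec_self _ (hg _), smul_zero, sub_zero, dotProduct_smul, dotProduct_add,
      dotProduct_sub, smul_eq_mul]
    ring
  refine ⟨key, funext fun i => ?_⟩
  have := key i
  simp only [Pi.neg_apply]
  linarith
end
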